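/- Let λ = √2 + 1 and let P₀(ξ) = 2πiξ − λ(e^{πiξ/√2} − 1) − λ^{-1}(1 − e^{−πiξ/√2}) and Q₀(ξ) = −λ(πi/√2)(e^{πiξ/√2} − 1) + λ^{-1}(πi/√2)(1 − e^{−πiξ/√2}). Then the first order linear ODE P₀(ξ)h′(ξ) + Q₀(ξ)h(ξ) = 0 has a solution ρ : (0, +∞) → ℂ (differentiable and satisfying the equation at every ξ > 0) such that for some δ > 0 and C > 0, |ρ(ξ) − ξ^{-2}| ≤ C ξ^{-1} for all 0 < ξ < δ. -/

import Mathlib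

noncomputable section

/-- The Bäcklund parameter λ = √2 + 1. -/
def lam : ℂ := ((Real.sqrt 2 + 1 : ℝ) : ℂ)

/-- P₀(ξ) = 2πiξ − λ(e^{πiξ/√2} − 1) − λ⁻¹(1 − e^{−πiξ/√2}). -/
def P0 (ξ : ℝ) : ℂ :=
  2 * (Real.pi : ℂ) * Complex.I * (ξ : ℂ)
  - lam * (Complex.exp ((Real.pi : ℂ) * Complex.I * (ξ : ℂ) / (Real.sqrt 2 : ℂ)) - 1)
  - lam⁻¹ * (1 - Complex.exp (-((Real.pi : ℂ) * Complex.I * (ξ : ℂ) / (Real.sqrt 2 : ℂ))))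

/-- Q₀(ξ) = −λ(πi/√2)(e^{πiξ/√2} − 1) + λ⁻¹(πi/√2)(1 − e^{−πiξ/√2}). -/
def Q0 (ξ : ℝ) : ℂ :=
  -lam * ((Real.pi : ℂ) * Complex.I / (Real.sqrt 2 : ℂ))
     * (Complex.exp ((Real.pi : ℂ) * Complex.I * (ξ : ℂ) / (Real.sqrt 2 : ℂ)) - 1)
  + lam⁻¹ * ((Real.pi : ℂ) * Complex.I / (Real.sqrt 2 : ℂ))
     * (1 - Complex.exp (-((Real.pi : ℂ) * Complex.I * (ξ : ℂ) / (Real.sqrt 2 : ℂ))))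

/-!
Write `θ = πξ/√2`. Then `P₀(ξ) = 2(1 - cos θ) + 2√2 i (θ - sin θ)` has positive imaginary part for
`ξ > 0` (as `sin θ < θ`) and `P₀' = Q₀`, so `ρ = (π²/2) / P₀` solves `P₀ ρ' + Q₀ ρ = 0`.
By Taylor expansion `P₀(ξ) = θ² + O(θ³)`, and `θ² = π²ξ²/2`, hence
`ρ(ξ) = ξ⁻² (1 + O(θ)) = ξ⁻² + O(ξ⁻¹)`.
-/

open Complex Real

theorem mul_deriv_const_div_add_eq_zero {𝕜 𝕜' : Type*} [NontriviallyNormedField 𝕜]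
    [NontriviallyNormedField 𝕜'] [NormedAlgebra 𝕜 𝕜'] {P : 𝕜 → 𝕜'} {P' : 𝕜'} {x : 𝕜}
    (c : 𝕜') (hP : HasDerivAt P P' x) (hx : P x ≠ 0) :
    P x * deriv (fun y => c / P y) x + P' * (c / P x) = 0 := by
  rw [((hasDerivAt_const x c).fun_div hP hx).deriv]
  field_simp
  ring

theorem norm_div_sub_one_le {𝕜 : Type*} [NormedField 𝕜] {a z : 𝕜} (ha : a ≠ 0)
    (h : ‖z - a‖ ≤ ‖a‖ / 2) : ‖a / z - 1‖ ≤ 2 * ‖z - a‖ / ‖a‖ := by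
  have hz : ‖a‖ / 2 ≤ ‖z‖ := by
    have := norm_sub_norm_le a (a - z)
    rw [sub_sub_cancel, norm_sub_rev] at this
    linarith
  have hz0 : z ≠ 0 := norm_pos_iff.mp (by linarith [norm_pos_iff.mpr ha])
  calc ‖a / z - 1‖ = ‖z - a‖ / ‖z‖ := by
        rw [div_sub_one hz0, norm_div, norm_sub_rev]
    _ ≤ ‖z - a‖ / (‖a‖ / 2) := by gcongr
    _ = 2 * ‖z - a‖ / ‖a‖ := by field_simp

lemma lam_inv : lam⁻¹ = ((√2 - 1 : ℝ) : ℂ) := by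
  rw [lam, ← ofReal_inv, inv_eq_of_mul_eq_one_right]
  ring_nf
  norm_num

lemma lam_add_inv : lam + lam⁻¹ = 2 * (√2 : ℂ) := by
  rw [lam_inv, lam]; push_cast; ring

lemma P0_eq {ξ θ : ℝ} (hθ : π * ξ = √2 * θ) :
    P0 ξ = (2 * (1 - Real.cos θ) : ℝ) + (2 * √2 * (θ - Real.sin θ) : ℝ) * I := by
  have harg : (π : ℂ) * I * ξ / √2 = θ * I := by
    rw [div_eq_iff (by simp), mul_right_comm, ← ofReal_mul, hθ]
    push_cast
    ring
  rw [P0, harg, lam_inv, lam, exp_mul_I, ← neg_mul, exp_mul_I]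
  push_cast
  rw [Complex.cos_neg, Complex.sin_neg]
  have hξ : (π : ℂ) * ξ = √2 * θ := by exact_mod_cast hθ
  linear_combination (2 * I) * hξ

lemma P0_ne_zero {ξ : ℝ} (hξ : 0 < ξ) : P0 ξ ≠ 0 := by
  set θ := π * ξ / √2 with hθ
  have him : (P0 ξ).im = 2 * √2 * (θ - Real.sin θ) := by
    rw [P0_eq (θ := θ) (by rw [hθ, mul_div_cancel₀ _ (by positivity)])]
    simp [sin_ofReal_re]
  have him_pos : 0 < (P0 ξ).im := by
    rw [him]
    exact mul_pos (by positivity) (sub_pos.mpr (Real.sin_lt (by positivity)))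
  exact fun h => him_pos.ne' (by rw [h, zero_im])

lemma hasDerivAt_P0 (ξ : ℝ) : HasDerivAt P0 (Q0 ξ) ξ := by
  set c : ℂ := π * I / √2 with hc
  have h2pi : 2 * π * I = (lam + lam⁻¹) * c := by
    rw [lam_add_inv, hc]
    field_simp
  have harg (x : ℝ) : (π : ℂ) * I * x / √2 = c * x := by rw [hc]; ring
  have hP0 : P0 = fun x : ℝ =>
      (lam + lam⁻¹) * (c * x) - lam * (exp (c * x) - 1) - lam⁻¹ * (1 - exp (-(c * x))) := by
    ext x
    rw [P0, h2pi, harg]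
    ring
  have hlin : HasDerivAt (fun x : ℝ => c * x) c ξ := by
    simpa using (ofRealCLM.hasDerivAt (x := ξ)).const_mul c
  rw [hP0]
  refine (((hlin.const_mul _).fun_sub ((hlin.cexp.sub_const 1).const_mul lam)).fun_sub
    ((hlin.fun_neg.cexp.const_sub 1).const_mul lam⁻¹)).congr_deriv ?_
  rw [Q0, harg]
  ring

lemma norm_P0_sub_sq_le {ξ θ : ℝ} (hθ : π * ξ = √2 * θ) (h1 : |θ| ≤ 1) :
    ‖P0 ξ - (θ ^ 2 : ℝ)‖ ≤ |θ| ^ 3 := by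
  have hre : |2 * (1 - Real.cos θ) - θ ^ 2| ≤ 5 / 48 * |θ| ^ 3 := by
    have hcos := Real.cos_bound h1
    have h43 : |θ| ^ 4 ≤ |θ| ^ 3 := pow_le_pow_of_le_one (abs_nonneg θ) h1 (by norm_num)
    calc |2 * (1 - Real.cos θ) - θ ^ 2| = 2 * |Real.cos θ - (1 - θ ^ 2 / 2)| := by
          rw [← abs_two, ← abs_mul, ← abs_neg]; ring_nf
      _ ≤ 5 / 48 * |θ| ^ 3 := by nlinarith
  have him : |2 * √2 * (θ - Real.sin θ)| ≤ √2 / 3 * |θ| ^ 3 := by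
    rw [abs_mul, abs_of_pos (by positivity : (0 : ℝ) < 2 * √2)]
    nlinarith [Real.abs_sub_sin_le θ, Real.sqrt_nonneg 2]
  have hsqrt : √2 < 3 / 2 := by
    rw [Real.sqrt_lt' (by norm_num)]; norm_num
  calc ‖P0 ξ - (θ ^ 2 : ℝ)‖
      ≤ |2 * (1 - Real.cos θ) - θ ^ 2| + |2 * √2 * (θ - Real.sin θ)| := by
        refine (norm_le_abs_re_add_abs_im _).trans_eq ?_
        rw [P0_eq hθ]
        simp only [sub_re, add_re, sub_im, add_im, mul_re, mul_im, ofReal_re, ofReal_im, I_re,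
          I_im]
        ring_nf
    _ ≤ |θ| ^ 3 := by nlinarith [pow_nonneg (abs_nonneg θ) 3]

def rho (ξ : ℝ) : ℂ := (π : ℂ) ^ 2 / 2 / P0 ξ

lemma rho_solves_ode {ξ : ℝ} (hξ : 0 < ξ) :
    DifferentiableAt ℝ rho ξ ∧ P0 ξ * deriv rho ξ + Q0 ξ * rho ξ = 0 :=
  ⟨(differentiableAt_const _).div (hasDerivAt_P0 ξ).differentiableAt (P0_ne_zero hξ),
    mul_deriv_const_div_add_eq_zero _ (hasDerivAt_P0 ξ) (P0_ne_zero hξ)⟩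

lemma rho_eq {ξ θ : ℝ} (hξ : ξ ≠ 0) (hθ : π * ξ = √2 * θ) :
    rho ξ = ((ξ : ℂ) ^ 2)⁻¹ * ((θ ^ 2 : ℝ) / P0 ξ) := by
  have hsq : (π : ℂ) ^ 2 * ξ ^ 2 = 2 * θ ^ 2 := by
    have := congrArg (· ^ 2) hθ
    simp only [mul_pow, Real.sq_sqrt zero_le_two] at this
    exact_mod_cast this
  have hξ' : (ξ : ℂ) ≠ 0 := ofReal_ne_zero.mpr hξ
  rw [rho, mul_div_assoc']
  congr 1
  field_simp
  push_cast
  linear_combination hsq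

lemma norm_rho_sub_inv_sq_le {ξ : ℝ} (hξ : 0 < ξ) (hξδ : ξ ≤ √2 / (2 * π)) :
    ‖rho ξ - ((ξ : ℂ) ^ 2)⁻¹‖ ≤ √2 * π * ξ⁻¹ := by
  set θ := π * ξ / √2 with hθ_def
  have hθ : π * ξ = √2 * θ := by rw [hθ_def, mul_div_cancel₀ _ (by positivity)]
  have hθ_pos : 0 < θ := by positivity
  have hθ_half : θ ≤ 1 / 2 := by
    rw [hθ_def, div_le_iff₀ (by positivity)]
    rw [le_div_iff₀ (by positivity)] at hξδ
    linarith
  have hnorm_sq : ‖((θ ^ 2 : ℝ) : ℂ)‖ = θ ^ 2 := by simp [sq_abs]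
  have hclose : ‖P0 ξ - (θ ^ 2 : ℝ)‖ ≤ θ ^ 3 := by
    simpa [abs_of_pos hθ_pos] using norm_P0_sub_sq_le hθ (by rw [abs_of_pos hθ_pos]; linarith)
  have hratio : ‖(θ ^ 2 : ℝ) / P0 ξ - 1‖ ≤ 2 * θ := by
    have hθ_sq : ((θ ^ 2 : ℝ) : ℂ) ≠ 0 := ofReal_ne_zero.mpr (by positivity)
    refine (norm_div_sub_one_le hθ_sq (by rw [hnorm_sq]; nlinarith)).trans ?_
    rw [hnorm_sq, div_le_iff₀ (by positivity)]
    nlinarith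
  calc ‖rho ξ - ((ξ : ℂ) ^ 2)⁻¹‖ = ξ⁻¹ ^ 2 * ‖(θ ^ 2 : ℝ) / P0 ξ - 1‖ := by
        rw [rho_eq hξ.ne' hθ, ← mul_sub_one, norm_mul, norm_inv, norm_pow, norm_real,
          Real.norm_of_nonneg hξ.le, inv_pow]
    _ ≤ ξ⁻¹ ^ 2 * (2 * θ) := by gcongr
    _ = √2 * π * ξ⁻¹ := by
        rw [hθ_def]
        field_simp
        rw [Real.sq_sqrt zero_le_two]

/-- The ODE P₀h′ + Q₀h = 0 has a solution on (0, +∞) behaving like ξ^{-2} at 0. -/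
theorem ode_solution_rho :
    ∃ ρ : ℝ → ℂ,
      (∀ ξ : ℝ, 0 < ξ →
        DifferentiableAt ℝ ρ ξ ∧ P0 ξ * deriv ρ ξ + Q0 ξ * ρ ξ = 0) ∧
      (∃ δ > (0:ℝ), ∃ C > (0:ℝ), ∀ ξ : ℝ, 0 < ξ → ξ < δ →
        ‖ρ ξ - ((ξ : ℂ)^2)⁻¹‖ ≤ C * ξ⁻¹) :=
  ⟨rho, fun _ hξ => rho_solves_ode hξ, √2 / (2 * π), by positivity, √2 * π, by positivity,
    fun _ hξ hξδ => norm_rho_sub_inv_sq_le hξ hξδ.le⟩
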